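/- Let J be a 3×3 real positive definite matrix and F a 3×3 real positive definite matrix with Tr(J^{-1} F) = 1. Set H = F J^{-1} F. Then (Tr √(√(J^{-1}) H √(J^{-1})))² = Tr(H F^{-1}). -/

import Mathlib

/-! With `S = √P`, the matrix `S F S` is positive semidefinite and squares to
`S (F P F) S`, so it is the square root of the latter; its trace is `Tr (P F)`.
For `P = J⁻¹` both sides of the identity are then powers of `Tr (J⁻¹ F) = 1`. -/

open Matrix

open scoped Classical in
noncomputable def msqrt {d : ℕ} (A : Matrix (Fin d) (Fin d) ℝ) : Matrix (Fin d) (Fin d) ℝ :=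
  if h : A.PosSemidef then
    (h.1.eigenvectorUnitary : Matrix (Fin d) (Fin d) ℝ) *
      diagonal ((↑) ∘ Real.sqrt ∘ h.1.eigenvalues) *
      (star h.1.eigenvectorUnitary : Matrix (Fin d) (Fin d) ℝ) else 0

namespace Matrix

variable {d : ℕ}

open scoped MatrixOrder in
theorem msqrt_eq_cfcSqrt {A : Matrix (Fin d) (Fin d) ℝ} (hA : A.PosSemidef) :
    msqrt A = CFC.sqrt A := by
  rw [msqrt, dif_pos hA, CFC.sqrt_eq_real_sqrt A hA.nonneg, cfcₙ_eq_cfc, hA.1.cfc_eq,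
    IsHermitian.cfc, Unitary.conjStarAlgAut_apply]
  rfl

open scoped MatrixOrder in
theorem PosSemidef.msqrt {A : Matrix (Fin d) (Fin d) ℝ} (hA : A.PosSemidef) :
    (msqrt A).PosSemidef := by
  rw [msqrt_eq_cfcSqrt hA]
  exact (CFC.sqrt_nonneg A).posSemidef

open scoped MatrixOrder in
theorem msqrt_mul_msqrt {A : Matrix (Fin d) (Fin d) ℝ} (hA : A.PosSemidef) :
    msqrt A * msqrt A = A := by
  rw [msqrt_eq_cfcSqrt hA]
  exact CFC.sqrt_mul_sqrt_self A hA.nonneg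

open scoped MatrixOrder in
theorem msqrt_sq {B : Matrix (Fin d) (Fin d) ℝ} (hB : B.PosSemidef) : msqrt (B ^ 2) = B := by
  rw [msqrt_eq_cfcSqrt (hB.pow 2)]
  exact CFC.sqrt_sq B hB.nonneg

theorem msqrt_conj_mul_conj {P F : Matrix (Fin d) (Fin d) ℝ} (hP : P.PosSemidef)
    (hF : F.PosSemidef) :
    msqrt (msqrt P * (F * P * F) * msqrt P) = msqrt P * F * msqrt P := by
  set S := msqrt P
  have hSS : S * S = P := msqrt_mul_msqrt hP
  have hSFS : (S * F * S).PosSemidef := by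
    have hS : Sᴴ = S := hP.msqrt.1
    simpa only [hS] using hF.mul_mul_conjTranspose_same S
  have hsq : (S * F * S) ^ 2 = S * (F * P * F) * S := by
    rw [sq, ← hSS]
    noncomm_ring
  rw [← hsq, msqrt_sq hSFS]

theorem trace_msqrt_conj_mul_conj {P F : Matrix (Fin d) (Fin d) ℝ} (hP : P.PosSemidef)
    (hF : F.PosSemidef) :
    (msqrt (msqrt P * (F * P * F) * msqrt P)).trace = (P * F).trace := by
  rw [msqrt_conj_mul_conj hP hF, trace_mul_cycle, msqrt_mul_msqrt hP]

end Matrix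

/-- If `J`, `F` are `3×3` real positive definite matrices with `Tr(J⁻¹ F) = 1`, and
`H = F J⁻¹ F`, then `(Tr √(√(J⁻¹) H √(J⁻¹)))² = Tr(H F⁻¹)`. -/
theorem stmt6 (J F : Matrix (Fin 3) (Fin 3) ℝ) (hJ : J.PosDef) (hF : F.PosDef)
    (htr : (J⁻¹ * F).trace = 1)
    (H : Matrix (Fin 3) (Fin 3) ℝ) (hH : H = F * J⁻¹ * F) :
    ((msqrt (msqrt J⁻¹ * H * msqrt J⁻¹)).trace) ^ 2 = (H * F⁻¹).trace := by
  have hFF : F * F⁻¹ = 1 := mul_nonsing_inv F (isUnit_iff_ne_zero.mpr hF.det_pos.ne')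
  subst hH
  rw [trace_msqrt_conj_mul_conj hJ.inv.posSemidef hF.posSemidef, mul_assoc, hFF, mul_one,
    trace_mul_comm F, htr, one_pow]
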